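/- arXiv:2403.01293 — 9 statements merged into one kernel-verified Lean document; each statement's English description precedes it below -/
import Mathlib

section
/- For every integer n ≥ 4, the graph Γ(n) is a strongly regular graph with parameters (n², 3n−3, n, 6); that is, Γ(n) has n² vertices, every vertex has exactly 3n−3 neighbours, every pair of adjacent vertices has exactly n common neighbours, and every pair of distinct non-adjacent vertices has exactly 6 common neighbours. -/
/-!
`Γ(n)` is the Cayley graph of `ℤ_n²` with respect to the symmetric set `S`, so the common
neighbours of `v` and `w` correspond to the ways of writing `v - w = s + t` with `s, t ∈ S`.
Now `S` is the union of the three lines `y = 0`, `x = 0`, `x = y` with the origin removed, and the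
swap and the shear `(x, y) ↦ (x, x - y)` are automorphisms of `ℤ_n²` permuting these lines. Hence
for `d ∈ S` we may assume `d = (c, 0)`, whose representations are `(t, 0)` with `t ≠ 0, c`
together with `(0, -c)` and `(c, c)`: `n` of them. For `d ∉ S ∪ {0}` every ordered pair of distinct
lines gives exactly one representation (any two of the lines are complementary), `6` in all.
-/

/-- The connection set `S = {(i,0), (0,i), (i,i) : 1 ≤ i ≤ n-1}` of `ℤ_n × ℤ_n`. -/
def cayS (n : ℕ) : Set (ZMod n × ZMod n) :=
  {p | p ≠ 0 ∧ (p.2 = 0 ∨ p.1 = 0 ∨ p.1 = p.2)}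

/-- The Cayley graph `Γ(n) = Cay(ℤ_n × ℤ_n; S)`. -/
def Gamma (n : ℕ) : SimpleGraph (ZMod n × ZMod n) where
  Adj x y := x ≠ y ∧ x - y ∈ cayS n
  symm := by
    constructor
    rintro x y ⟨hxy, hne, h⟩
    refine ⟨Ne.symm hxy, sub_ne_zero_of_ne (Ne.symm hxy), ?_⟩
    simp only [Prod.fst_sub, Prod.snd_sub] at h ⊢
    rcases h with h | h | h
    · exact Or.inl (by linear_combination -h)
    · exact Or.inr (Or.inl (by linear_combination -h))
    · exact Or.inr (Or.inr (by linear_combination -h))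
  loopless := ⟨fun x h => h.1 rfl⟩

section SumReps

variable {G : Type*}

def sumReps [Sub G] (s : Set G) (d : G) : Set G :=
  {g | g ∈ s ∧ d - g ∈ s}

variable [AddGroup G] {s : Set G}

theorem sumReps_map (f : G ≃+ G) (hf : ∀ g, f g ∈ s ↔ g ∈ s) (d : G) :
    sumReps s (f d) = f '' sumReps s d := by
  ext g
  obtain ⟨g, rfl⟩ := f.surjective g
  simp [sumReps, f.injective.mem_set_image, ← map_sub, hf]

theorem ncard_sumReps_map (f : G ≃+ G) (hf : ∀ g, f g ∈ s ↔ g ∈ s) (d : G) :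
    (sumReps s (f d)).ncard = (sumReps s d).ncard := by
  rw [sumReps_map f hf, Set.ncard_image_of_injective _ f.injective]

end SumReps

namespace SimpleGraph

variable {M : Type*} [AddCommGroup M] {s : Set M}

theorem addCayley_adj_iff_sub_mem (hs : -s = s) (h0 : 0 ∉ s) {u v : M} :
    (addCayley s).Adj u v ↔ u - v ∈ s := by
  rw [addCayley_adj, neg_add_eq_sub, neg_add_eq_sub, ← neg_sub, ← Set.mem_neg, hs, or_self,
    and_iff_right_iff_imp]
  rintro h rfl
  exact h0 (by simpa using h)

theorem card_neighborSet_addCayley (hs : -s = s) (h0 : 0 ∉ s) (v : M) :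
    Nat.card ((addCayley s).neighborSet v) = Nat.card s :=
  Nat.card_congr <| (Equiv.subLeft v).subtypeEquiv fun _ => addCayley_adj_iff_sub_mem hs h0

theorem card_commonNeighbors_addCayley (hs : -s = s) (h0 : 0 ∉ s) (v w : M) :
    Nat.card ((addCayley s).commonNeighbors v w) = (sumReps s (v - w)).ncard := by
  rw [← Nat.card_coe_set_eq]
  refine Nat.card_congr <| (Equiv.subRight w).subtypeEquiv fun z => ?_
  rw [mem_commonNeighbors, addCayley_adj_iff_sub_mem hs h0, addCayley_adj_iff_sub_mem hs h0,
    ← neg_sub z w, ← Set.mem_neg, hs, and_comm]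
  simp [sumReps]

end SimpleGraph

namespace Gamma

variable {n : ℕ}

theorem zero_notMem_cayS : (0 : ZMod n × ZMod n) ∉ cayS n := fun h => h.1 rfl

theorem neg_cayS : -cayS n = cayS n := by
  ext ⟨x, y⟩
  simp only [cayS, Set.mem_neg, Set.mem_ofPred_eq, Prod.neg_mk, Ne, neg_eq_zero,
    Prod.mk_eq_zero, neg_inj]

theorem eq_addCayley : Gamma n = SimpleGraph.addCayley (cayS n) := by
  ext x y
  rw [SimpleGraph.addCayley_adj_iff_sub_mem neg_cayS zero_notMem_cayS]
  exact and_iff_right_of_imp fun h hxy => zero_notMem_cayS (by rwa [hxy, sub_self] at h)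

theorem cayS_eq_union : cayS n =
    (fun t => (t, 0)) '' {0}ᶜ ∪ (fun t => (0, t)) '' {0}ᶜ ∪ (fun t => (t, t)) '' {0}ᶜ := by
  ext ⟨x, y⟩
  simp only [cayS, ne_eq, Set.mem_ofPred_eq, Prod.mk_eq_zero, not_and, Set.mem_union,
    Set.mem_image, Set.mem_compl_iff, Set.mem_singleton_iff, Prod.mk.injEq, ↓existsAndEq,
    true_and, exists_eq_right_right]
  grind

theorem swap_mem_cayS (p : ZMod n × ZMod n) : AddEquiv.prodComm p ∈ cayS n ↔ p ∈ cayS n := by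
  obtain ⟨x, y⟩ := p
  simp only [cayS, ne_eq, AddEquiv.coe_prodComm, Prod.swap_prod_mk, Set.mem_ofPred_eq,
    Prod.mk_eq_zero, not_and]
  grind

def shear (n : ℕ) : (ZMod n × ZMod n) ≃+ (ZMod n × ZMod n) where
  toFun p := (p.1, p.1 - p.2)
  invFun p := (p.1, p.1 - p.2)
  left_inv p := by simp
  right_inv p := by simp
  map_add' p q := by
    ext
    · rfl
    · exact add_sub_add_comm p.1 q.1 p.2 q.2

theorem shear_mem_cayS (p : ZMod n × ZMod n) : shear n p ∈ cayS n ↔ p ∈ cayS n := by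
  obtain ⟨x, y⟩ := p
  simp only [cayS, shear, AddEquiv.coe_mk, Equiv.coe_fn_mk, Set.mem_ofPred_eq, Ne,
    Prod.mk_eq_zero]
  grind

theorem sumReps_cayS_mk_zero {c : ZMod n} (hc : c ≠ 0) :
    sumReps (cayS n) (c, 0) = (fun t => (t, 0)) '' {0, c}ᶜ ∪ {(0, -c), (c, c)} := by
  ext ⟨x, y⟩
  simp only [sumReps, cayS, ne_eq, Set.mem_ofPred_eq, Prod.mk_sub_mk, Prod.mk_eq_zero, not_and,
    Set.union_insert, Set.union_singleton, Set.mem_insert_iff, Prod.mk.injEq, Set.mem_image,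
    Set.mem_compl_iff, Set.mem_singleton_iff, not_or, ↓existsAndEq, true_and]
  grind

theorem sumReps_cayS_mk {a b : ZMod n} (ha : a ≠ 0) (hb : b ≠ 0) (hab : a ≠ b) :
    sumReps (cayS n) (a, b) = {(a, 0), (a - b, 0), (0, b), (0, b - a), (b, b), (a, a)} := by
  ext ⟨x, y⟩
  simp only [sumReps, cayS, Set.mem_ofPred_eq, Prod.mk_sub_mk, Set.mem_insert_iff,
    Set.mem_singleton_iff, Prod.mk.injEq, Ne, Prod.mk_eq_zero]
  grind

theorem ncard_sumReps_cayS_of_notMem {d : ZMod n × ZMod n} (hd0 : d ≠ 0) (hd : d ∉ cayS n) :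
    (sumReps (cayS n) d).ncard = 6 := by
  obtain ⟨a, b⟩ := d
  simp only [cayS, Set.mem_ofPred_eq, not_and, not_or] at hd
  obtain ⟨hb, ha, hab⟩ := hd hd0
  rw [sumReps_cayS_mk ha hb hab, Set.ncard_eq_toFinset_card']
  simp only [Set.toFinset_insert, Set.toFinset_singleton]
  grind

variable [NeZero n]

theorem ncard_cayS : (cayS n).ncard = 3 * n - 3 := by
  have hline (f : ZMod n → ZMod n × ZMod n) (hf : f.Injective) : (f '' {0}ᶜ).ncard = n - 1 := by
    rw [Set.ncard_image_of_injective _ hf, Set.ncard_compl, Nat.card_zmod, Set.ncard_singleton]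
  rw [cayS_eq_union, Set.ncard_union_eq, Set.ncard_union_eq,
    hline _ fun _ _ h => congrArg Prod.fst h, hline _ fun _ _ h => congrArg Prod.snd h,
    hline _ fun _ _ h => congrArg Prod.fst h]
  · omega
  · simp only [Set.disjoint_left, Set.mem_image, Set.mem_compl_iff, Set.mem_singleton_iff,
      not_exists, not_and, forall_exists_index, and_imp, forall_apply_eq_imp_iff₂, Prod.mk.injEq]
    grind
  · simp only [Set.disjoint_left, Set.mem_union, Set.mem_image, Set.mem_compl_iff,
      Set.mem_singleton_iff, not_exists, not_and, Prod.forall, Prod.mk.injEq, ↓existsAndEq,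
      true_and, exists_eq_right_right]
    grind

theorem ncard_sumReps_cayS_mk_zero {c : ZMod n} (hc : c ≠ 0) :
    (sumReps (cayS n) (c, 0)).ncard = n := by
  have hpair : ({0, c} : Set (ZMod n)).ncard = 2 := Set.ncard_pair hc.symm
  have hle : 2 ≤ n := by simpa [hpair] using Set.ncard_le_card ({0, c} : Set (ZMod n))
  rw [sumReps_cayS_mk_zero hc, Set.ncard_union_eq, Set.ncard_image_of_injective _
    fun _ _ h => congrArg Prod.fst h, Set.ncard_compl, Nat.card_zmod, hpair,
    Set.ncard_pair fun h => hc (congrArg Prod.fst h).symm]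
  · omega
  · simp only [Set.disjoint_left, Set.mem_image, Set.mem_compl_iff, Set.mem_insert_iff,
      Set.mem_singleton_iff, not_or, forall_exists_index, and_imp, Prod.forall, Prod.mk.injEq]
    grind

theorem ncard_sumReps_cayS_of_mem {d : ZMod n × ZMod n} (hd : d ∈ cayS n) :
    (sumReps (cayS n) d).ncard = n := by
  obtain ⟨x, y⟩ := d
  obtain ⟨hne, rfl | rfl | hxy⟩ := hd
  · exact ncard_sumReps_cayS_mk_zero fun hx => hne (by rw [hx]; rfl)
  · rw [show ((0 : ZMod n), y) = AddEquiv.prodComm (y, 0) from rfl,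
      ncard_sumReps_map _ swap_mem_cayS]
    exact ncard_sumReps_cayS_mk_zero fun hy => hne (by rw [hy]; rfl)
  · obtain rfl : x = y := hxy
    rw [show (x, x) = shear n (x, 0) from Prod.ext rfl (sub_zero x).symm,
      ncard_sumReps_map _ shear_mem_cayS]
    exact ncard_sumReps_cayS_mk_zero fun hx => hne (by rw [hx]; rfl)

end Gamma

open SimpleGraph Gamma in
/-- For `n ≥ 4`, `Γ(n)` is strongly regular with parameters
`(n², 3n-3, n, 6)`. -/
theorem Gamma_isSRGWith (n : ℕ) (hn : 4 ≤ n) :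
    haveI : NeZero n := ⟨by omega⟩
    haveI : DecidableRel (Gamma n).Adj := Classical.decRel _
    (Gamma n).IsSRGWith (n ^ 2) (3 * n - 3) n 6 := by
  have : NeZero n := ⟨by omega⟩
  let : DecidableRel (Gamma n).Adj := Classical.decRel _
  have hcard (v w) :
      Nat.card ((Gamma n).commonNeighbors v w) = (sumReps (cayS n) (v - w)).ncard := by
    rw [eq_addCayley, card_commonNeighbors_addCayley neg_cayS zero_notMem_cayS]
  refine ⟨by simp [sq], fun v => ?_, fun v w hadj => ?_, fun v w hne hnadj => ?_⟩
  · rw [← card_neighborSet_eq_degree, Fintype.card_eq_nat_card, eq_addCayley,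
      card_neighborSet_addCayley neg_cayS zero_notMem_cayS, Nat.card_coe_set_eq, ncard_cayS]
  · rw [Fintype.card_eq_nat_card, hcard]
    exact ncard_sumReps_cayS_of_mem hadj.2
  · rw [Fintype.card_eq_nat_card, hcard]
    exact ncard_sumReps_cayS_of_notMem (sub_ne_zero.2 hne) fun h => hnadj ⟨hne, h⟩
end

section
/- For every integer n ≥ 4, the neighbourhood of the vertex (0,0) in Γ(n) is the disjoint union of the three sets C₁ = {(i,0) : 1 ≤ i ≤ n−1}, C₂ = {(0,i) : 1 ≤ i ≤ n−1} and C₃ = {(i,i) : 1 ≤ i ≤ n−1}, each of size n−1; each Cₖ is a clique of Γ(n), and each Cₖ is a maximal clique of the subgraph of Γ(n) induced on the neighbourhood of (0,0) (i.e., no vertex of the neighbourhood outside Cₖ is adjacent to every vertex of Cₖ). -/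
/-- `C₁ = {(i,0) : 1 ≤ i ≤ n-1}`. -/
def C1 (n : ℕ) : Set (ZMod n × ZMod n) := {p | p.2 = 0 ∧ p.1 ≠ 0}

/-- `C₂ = {(0,i) : 1 ≤ i ≤ n-1}`. -/
def C2 (n : ℕ) : Set (ZMod n × ZMod n) := {p | p.1 = 0 ∧ p.2 ≠ 0}

/-- `C₃ = {(i,i) : 1 ≤ i ≤ n-1}`. -/
def C3 (n : ℕ) : Set (ZMod n × ZMod n) := {p | p.1 = p.2 ∧ p.1 ≠ 0}

lemma exists_ne_ne_ne_of_three_lt_card {α : Type*} (h : 3 < Nat.card α) (x y z : α) :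
    ∃ w, w ≠ x ∧ w ≠ y ∧ w ≠ z := by
  classical
  have : Finite α := Nat.finite_of_card_ne_zero (by omega)
  have : Fintype α := Fintype.ofFinite α
  have hlt : ({x, y, z} : Finset α).card < (Finset.univ : Finset α).card := by
    rw [Finset.card_univ, ← Nat.card_eq_fintype_card]
    exact Finset.card_le_three.trans_lt h
  obtain ⟨w, -, hw⟩ := Finset.exists_mem_notMem_of_card_lt_card hlt
  simp only [Finset.mem_insert, Finset.mem_singleton, not_or] at hw
  exact ⟨w, hw⟩

lemma ZMod.ncard_setOf_ne_zero (n : ℕ) [NeZero n] : {i : ZMod n | i ≠ 0}.ncard = n - 1 := by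
  rw [← Set.compl_singleton_eq, Set.ncard_compl, Set.ncard_singleton, Nat.card_zmod]

variable {n : ℕ}

lemma neg_mem_cayS_iff {p : ZMod n × ZMod n} : -p ∈ cayS n ↔ p ∈ cayS n := by
  simp only [cayS, Set.mem_ofPred_eq, neg_ne_zero, Prod.fst_neg, Prod.snd_neg, neg_eq_zero,
    neg_inj]

lemma cayS_eq_C1_union_C2_union_C3 : cayS n = C1 n ∪ C2 n ∪ C3 n := by
  ext ⟨a, b⟩
  simp only [cayS, C1, C2, C3, Set.mem_union, Set.mem_ofPred_eq, ne_eq, Prod.mk_eq_zero]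
  constructor
  · rintro ⟨h0, hb | ha | hab⟩
    · exact Or.inl (Or.inl ⟨hb, fun ha => h0 ⟨ha, hb⟩⟩)
    · exact Or.inl (Or.inr ⟨ha, fun hb => h0 ⟨ha, hb⟩⟩)
    · exact Or.inr ⟨hab, fun ha => h0 ⟨ha, hab ▸ ha⟩⟩
  · rintro ((⟨hb, ha⟩ | ⟨ha, hb⟩) | ⟨hab, ha⟩)
    · exact ⟨fun h => ha h.1, Or.inl hb⟩
    · exact ⟨fun h => hb h.2, Or.inr (Or.inl ha)⟩
    · exact ⟨fun h => ha h.1, Or.inr (Or.inr hab)⟩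

lemma disjoint_C1_C2 : Disjoint (C1 n) (C2 n) :=
  Set.disjoint_left.mpr fun _ h1 h2 => h1.2 h2.1

lemma disjoint_C1_C3 : Disjoint (C1 n) (C3 n) :=
  Set.disjoint_left.mpr fun _ h1 h3 => h3.2 (h3.1.trans h1.1)

lemma disjoint_C2_C3 : Disjoint (C2 n) (C3 n) :=
  Set.disjoint_left.mpr fun _ h2 h3 => h3.2 h2.1

lemma C1_eq_image : C1 n = (fun i => (i, 0)) '' {i | i ≠ 0} := by
  ext ⟨a, b⟩
  simp [C1, and_comm, eq_comm]

lemma C2_eq_image : C2 n = (fun i => (0, i)) '' {i | i ≠ 0} := by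
  ext ⟨a, b⟩
  simp [C2, and_comm, eq_comm]

lemma C3_eq_image : C3 n = (fun i => (i, i)) '' {i | i ≠ 0} := by
  ext ⟨a, b⟩
  simp [C3, and_comm, eq_comm]

lemma ncard_C1 [NeZero n] : (C1 n).ncard = n - 1 := by
  rw [C1_eq_image, Set.ncard_image_of_injective _ (Prod.mk_left_injective 0),
    ZMod.ncard_setOf_ne_zero]

lemma ncard_C2 [NeZero n] : (C2 n).ncard = n - 1 := by
  rw [C2_eq_image, Set.ncard_image_of_injective _ (Prod.mk_right_injective 0),
    ZMod.ncard_setOf_ne_zero]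

lemma ncard_C3 [NeZero n] : (C3 n).ncard = n - 1 := by
  rw [C3_eq_image, Set.ncard_image_of_injective _ fun _ _ h => congrArg Prod.fst h,
    ZMod.ncard_setOf_ne_zero]

namespace Gamma

lemma adj_iff_sub_mem_cayS {x y : ZMod n × ZMod n} : (Gamma n).Adj x y ↔ x - y ∈ cayS n :=
  ⟨And.right, fun h => ⟨sub_ne_zero.mp h.1, h⟩⟩

lemma neighborSet_zero : (Gamma n).neighborSet 0 = cayS n := by
  ext v
  rw [SimpleGraph.mem_neighborSet, adj_iff_sub_mem_cayS, zero_sub, neg_mem_cayS_iff]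

lemma isClique_C1 : (Gamma n).IsClique (C1 n) := by
  rintro x ⟨hx, -⟩ y ⟨hy, -⟩ hne
  exact ⟨hne, sub_ne_zero.mpr hne, Or.inl (by rw [Prod.snd_sub, hx, hy, sub_zero])⟩

lemma isClique_C2 : (Gamma n).IsClique (C2 n) := by
  rintro x ⟨hx, -⟩ y ⟨hy, -⟩ hne
  exact ⟨hne, sub_ne_zero.mpr hne, Or.inr (Or.inl (by rw [Prod.fst_sub, hx, hy, sub_zero]))⟩

lemma isClique_C3 : (Gamma n).IsClique (C3 n) := by
  rintro x ⟨hx, -⟩ y ⟨hy, -⟩ hne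
  exact ⟨hne, sub_ne_zero.mpr hne, Or.inr (Or.inr (by rw [Prod.fst_sub, Prod.snd_sub, hx, hy]))⟩

lemma exists_mem_C1_not_adj (hn : 3 < n) {v : ZMod n × ZMod n} (hv0 : v ≠ 0) (hv : v ∉ C1 n) :
    ∃ w ∈ C1 n, ¬(Gamma n).Adj v w := by
  obtain ⟨a, b⟩ := v
  have hb : b ≠ 0 := fun hb => hv ⟨hb, fun ha => hv0 (Prod.ext ha hb)⟩
  obtain ⟨c, hc0, hca, hcab⟩ :=
    exists_ne_ne_ne_of_three_lt_card (by rwa [Nat.card_zmod]) (0 : ZMod n) a (a - b)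
  refine ⟨(c, 0), ⟨rfl, hc0⟩, fun hadj => ?_⟩
  have h := (adj_iff_sub_mem_cayS.mp hadj).2
  simp only [Prod.mk_sub_mk, sub_zero] at h
  rcases h with h | h | h
  · exact hb h
  · exact hca (sub_eq_zero.mp h).symm
  · exact hcab (by linear_combination -h)

lemma exists_mem_C2_not_adj (hn : 3 < n) {v : ZMod n × ZMod n} (hv0 : v ≠ 0) (hv : v ∉ C2 n) :
    ∃ w ∈ C2 n, ¬(Gamma n).Adj v w := by
  obtain ⟨a, b⟩ := v
  have ha : a ≠ 0 := fun ha => hv ⟨ha, fun hb => hv0 (Prod.ext ha hb)⟩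
  obtain ⟨c, hc0, hcb, hcba⟩ :=
    exists_ne_ne_ne_of_three_lt_card (by rwa [Nat.card_zmod]) (0 : ZMod n) b (b - a)
  refine ⟨(0, c), ⟨rfl, hc0⟩, fun hadj => ?_⟩
  have h := (adj_iff_sub_mem_cayS.mp hadj).2
  simp only [Prod.mk_sub_mk, sub_zero] at h
  rcases h with h | h | h
  · exact hcb (sub_eq_zero.mp h).symm
  · exact ha h
  · exact hcba (by linear_combination h)

lemma exists_mem_C3_not_adj (hn : 3 < n) {v : ZMod n × ZMod n} (hv0 : v ≠ 0) (hv : v ∉ C3 n) :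
    ∃ w ∈ C3 n, ¬(Gamma n).Adj v w := by
  obtain ⟨a, b⟩ := v
  have hab : a ≠ b := fun hab => hv ⟨hab, fun ha => hv0 (Prod.ext ha (hab.symm.trans ha))⟩
  obtain ⟨c, hc0, hca, hcb⟩ :=
    exists_ne_ne_ne_of_three_lt_card (by rwa [Nat.card_zmod]) (0 : ZMod n) a b
  refine ⟨(c, c), ⟨rfl, hc0⟩, fun hadj => ?_⟩
  have h := (adj_iff_sub_mem_cayS.mp hadj).2
  simp only [Prod.mk_sub_mk] at h
  rcases h with h | h | h
  · exact hcb (sub_eq_zero.mp h).symm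
  · exact hca (sub_eq_zero.mp h).symm
  · exact hab (sub_left_inj.mp h)

end Gamma

/-- For `n ≥ 4`, the neighbourhood of `(0,0)` in `Γ(n)` is the disjoint
union of `C₁`, `C₂`, `C₃`, each of size `n-1`; each `Cₖ` is a clique, and each `Cₖ` is a
maximal clique of the subgraph induced on the neighbourhood of `(0,0)`. -/
theorem Gamma_neighborhood_structure (n : ℕ) (hn : 4 ≤ n) :
    (Gamma n).neighborSet (0, 0) = C1 n ∪ C2 n ∪ C3 n ∧
    Disjoint (C1 n) (C2 n) ∧ Disjoint (C1 n) (C3 n) ∧ Disjoint (C2 n) (C3 n) ∧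
    (C1 n).ncard = n - 1 ∧ (C2 n).ncard = n - 1 ∧ (C3 n).ncard = n - 1 ∧
    (Gamma n).IsClique (C1 n) ∧ (Gamma n).IsClique (C2 n) ∧ (Gamma n).IsClique (C3 n) ∧
    (∀ v ∈ (Gamma n).neighborSet (0, 0), v ∉ C1 n → ∃ w ∈ C1 n, ¬ (Gamma n).Adj v w) ∧
    (∀ v ∈ (Gamma n).neighborSet (0, 0), v ∉ C2 n → ∃ w ∈ C2 n, ¬ (Gamma n).Adj v w) ∧
    (∀ v ∈ (Gamma n).neighborSet (0, 0), v ∉ C3 n → ∃ w ∈ C3 n, ¬ (Gamma n).Adj v w) := by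
  have : NeZero n := ⟨by omega⟩
  have ne_zero {v} (hv : v ∈ (Gamma n).neighborSet (0, 0)) : v ≠ 0 := ((Gamma n).ne_of_adj hv).symm
  exact ⟨Gamma.neighborSet_zero.trans cayS_eq_C1_union_C2_union_C3,
    disjoint_C1_C2, disjoint_C1_C3, disjoint_C2_C3, ncard_C1, ncard_C2, ncard_C3,
    Gamma.isClique_C1, Gamma.isClique_C2, Gamma.isClique_C3,
    fun _ hv => Gamma.exists_mem_C1_not_adj hn (ne_zero hv),
    fun _ hv => Gamma.exists_mem_C2_not_adj hn (ne_zero hv),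
    fun _ hv => Gamma.exists_mem_C3_not_adj hn (ne_zero hv)⟩
end

section
/- Let n ≥ 4 and let f be an automorphism of Γ(n) with f(0,0) = (0,0). Then f permutes the three cliques C₁, C₂, C₃: for every k ∈ {1,2,3} there exists ℓ ∈ {1,2,3} such that the image f(C_k) equals C_ℓ. -/
/-!
The neighbourhood of `0` is `C₁ ∪ C₂ ∪ C₃`. Inside it, `(b, 0)` is adjacent to `C₁ \ {(b, 0)}` and
to the two cross vertices `(0, -b)` and `(b, b)`, which are adjacent to each other iff `2b = 0`.
Call `uv` a K4-edge at `0` if `0, u, v` and a fourth vertex span a `K₄`; automorphisms fixing `0`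
preserve K4-edges. For `n ≥ 4` any two vertices of `C₁` form a K4-edge, while for `2b ≠ 0` no
cross edge at `(b, 0)` does, so the K4-neighbours of `(b, 0)` are exactly `C₁ \ {(b, 0)}`. If an
automorphism `h` fixing `0` sends `(1, 0)` to `(b, 0)`, then `2b ≠ 0`, since otherwise every edge
at `(b, 0)` would be a K4-edge while `(1, 0)(1, 1)` is not; hence `h` maps `C₁` onto `C₁`.
The automorphisms `(x, y) ↦ (y, x)` and `(x, y) ↦ (x, x - y)` carry `C₁` to `C₂` and `C₃`, which
reduces the general case to this one.
-/

namespace SimpleGraph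

variable {V W : Type*} {G : SimpleGraph V} {H : SimpleGraph W}

def InK4 (G : SimpleGraph V) (x u v : V) : Prop :=
  G.Adj x u ∧ G.Adj x v ∧ G.Adj u v ∧ ∃ w, G.Adj x w ∧ G.Adj u w ∧ G.Adj v w

theorem Iso.inK4_iff (e : G ≃g H) {x u v : V} :
    H.InK4 (e x) (e u) (e v) ↔ G.InK4 x u v := by
  simp only [InK4, e.map_adj_iff, e.surjective.exists]

theorem Iso.image_setOf_inK4 (e : G ≃g H) (x u : V) :
    e '' {v | G.InK4 x u v} = {v | H.InK4 (e x) (e u) v} := by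
  ext v
  constructor
  · rintro ⟨v, hv, rfl⟩
    exact e.inK4_iff.2 hv
  · intro hv
    refine ⟨e.symm v, ?_, e.apply_symm_apply v⟩
    rwa [Set.mem_ofPred_eq, ← e.inK4_iff, e.apply_symm_apply]

end SimpleGraph

theorem exists_ne_ne_ne {α : Type*} [Fintype α] (hα : 3 < Fintype.card α) (a b c : α) :
    ∃ d, d ≠ a ∧ d ≠ b ∧ d ≠ c := by
  classical
  obtain ⟨d, -, hd⟩ := Finset.exists_mem_notMem_of_card_lt_card (s := {a, b, c}) (t := .univ)
    (Finset.card_le_three.trans_lt (by rwa [Finset.card_univ]))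
  exact ⟨d, by simpa only [Finset.mem_insert, Finset.mem_singleton, not_or] using hd⟩

theorem ZMod.two_ne_zero_of_three_le {n : ℕ} (hn : 3 ≤ n) : (2 : ZMod n) ≠ 0 := by
  intro h
  have := Nat.le_of_dvd two_pos ((ZMod.natCast_eq_zero_iff 2 n).1 (by exact_mod_cast h))
  omega

namespace Gamma

variable {n : ℕ}

theorem adj_iff {x y : ZMod n × ZMod n} :
    (Gamma n).Adj x y ↔ x ≠ y ∧ (x.2 = y.2 ∨ x.1 = y.1 ∨ x.1 - x.2 = y.1 - y.2) := by
  simp only [Gamma, cayS, Set.mem_ofPred_eq, Prod.fst_sub, Prod.snd_sub, sub_eq_zero, ne_eq,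
    and_congr_right_iff]
  intro hxy
  simp only [hxy, not_false_eq_true, true_and, sub_eq_sub_iff_sub_eq_sub]

theorem adj_zero_iff {v : ZMod n × ZMod n} :
    (Gamma n).Adj 0 v ↔ ∃ k : Fin 3, v ∈ ![C1 n, C2 n, C3 n] k := by
  obtain ⟨a, b⟩ := v
  simp only [Fin.exists_fin_succ, Fin.exists_fin_zero, adj_iff, C1, C2, C3, ne_eq, Prod.ext_iff,
    Prod.fst_zero, Prod.snd_zero]
  simp
  grind

theorem one_mem_C1 (hn : 2 ≤ n) : ((1 : ZMod n), (0 : ZMod n)) ∈ C1 n :=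
  have : Fact (1 < n) := ⟨hn⟩
  ⟨rfl, one_ne_zero⟩

theorem mem_C1_or_eq_of_adj_of_adj {b : ZMod n} (hb : b ≠ 0) {v : ZMod n × ZMod n}
    (h0 : (Gamma n).Adj 0 v) (hbv : (Gamma n).Adj (b, 0) v) :
    v ∈ C1 n ∨ v = (0, -b) ∨ v = (b, b) := by
  obtain ⟨v1, v2⟩ := v
  simp only [adj_iff, C1, Set.mem_ofPred_eq, ne_eq, Prod.ext_iff, Prod.fst_zero, Prod.snd_zero] at *
  grind

theorem inK4_of_mem_C1 (hn : 4 ≤ n) {u v : ZMod n × ZMod n} (hu : u ∈ C1 n) (hv : v ∈ C1 n)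
    (huv : u ≠ v) : (Gamma n).InK4 0 u v := by
  have : NeZero n := ⟨by omega⟩
  obtain ⟨u1, u2⟩ := u
  obtain ⟨v1, v2⟩ := v
  obtain ⟨d, hd0, hdu, hdv⟩ := exists_ne_ne_ne (α := ZMod n) (by rw [ZMod.card]; omega) 0 u1 v1
  refine ⟨?_, ?_, ?_, (d, 0), ?_, ?_, ?_⟩ <;>
    simp_all [adj_iff, C1, Prod.ext_iff, eq_comm]

theorem inK4_of_two_mul_eq_zero (hn : 4 ≤ n) {b : ZMod n} (hb : b ≠ 0) (h2 : 2 * b = 0)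
    {v : ZMod n × ZMod n} (h0 : (Gamma n).Adj 0 v) (hbv : (Gamma n).Adj (b, 0) v) :
    (Gamma n).InK4 0 (b, 0) v := by
  have hbb : -b = b := by linear_combination -h2
  have h0b : (Gamma n).Adj 0 (b, 0) := by simp [adj_iff, Prod.ext_iff, hb.symm]
  rcases mem_C1_or_eq_of_adj_of_adj hb h0 hbv with hv | rfl | rfl
  · exact inK4_of_mem_C1 hn ⟨rfl, hb⟩ hv hbv.ne
  · refine ⟨h0b, h0, hbv, (b, b), ?_, ?_, ?_⟩ <;>
      simp [adj_iff, Prod.ext_iff, hb, hb.symm, hbb]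
  · refine ⟨h0b, h0, hbv, (0, -b), ?_, ?_, ?_⟩ <;>
      simp [adj_iff, Prod.ext_iff, hb, hb.symm, hbb]

theorem mem_C1_of_inK4 {b : ZMod n} (h2 : 2 * b ≠ 0) {v : ZMod n × ZMod n}
    (h : (Gamma n).InK4 0 (b, 0) v) : v ∈ C1 n := by
  obtain ⟨-, h0v, hbv, w, h0w, hbw, hvw⟩ := h
  have hb : b ≠ 0 := by rintro rfl; simp at h2
  have hcross : ¬ (Gamma n).Adj (0, -b) (b, b) := by
    simp only [adj_iff, ne_eq, Prod.ext_iff, not_and]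
    grind
  rcases mem_C1_or_eq_of_adj_of_adj hb h0v hbv with hv | rfl | rfl
  · exact hv
  all_goals
    exfalso
    rcases mem_C1_or_eq_of_adj_of_adj hb h0w hbw with hw | rfl | rfl
  · obtain ⟨w1, w2⟩ := w
    simp_all [adj_iff, Prod.ext_iff, C1]
  · exact hvw.ne rfl
  · exact hcross hvw
  · obtain ⟨w1, w2⟩ := w
    simp_all [adj_iff, Prod.ext_iff, C1]
  · exact hcross hvw.symm
  · exact hvw.ne rfl

theorem setOf_inK4_eq (hn : 4 ≤ n) {b : ZMod n} (h2 : 2 * b ≠ 0) :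
    {v | (Gamma n).InK4 0 (b, 0) v} = C1 n \ {(b, 0)} := by
  have hb : b ≠ 0 := by rintro rfl; simp at h2
  ext v
  constructor
  · intro h
    exact ⟨mem_C1_of_inK4 h2 h, h.2.2.1.ne.symm⟩
  · rintro ⟨hv, hne⟩
    exact inK4_of_mem_C1 hn ⟨rfl, hb⟩ hv (Ne.symm hne)

theorem image_C1_of_apply_mem_C1 (hn : 4 ≤ n) (h : Gamma n ≃g Gamma n) (h0 : h 0 = 0)
    (h1 : h (1, 0) ∈ C1 n) : h '' C1 n = C1 n := by
  have two : (2 : ZMod n) * 1 ≠ 0 := by rw [mul_one]; exact ZMod.two_ne_zero_of_three_le (by omega)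
  have one : (1 : ZMod n) ≠ 0 := (one_mem_C1 (by omega)).2
  obtain ⟨b, hb⟩ : ∃ b, h (1, 0) = (b, 0) := ⟨_, Prod.ext rfl h1.1⟩
  rw [hb] at h1
  have hb2 : 2 * b ≠ 0 := by
    intro hb2
    have h01 : (Gamma n).Adj 0 (1, 1) := by simp [adj_iff, Prod.ext_iff, one.symm]
    have h11 : (Gamma n).Adj (1, 0) (1, 1) := by simp [adj_iff, Prod.ext_iff, one.symm]
    have : (Gamma n).InK4 0 (1, 0) (1, 1) := by
      rw [← h.inK4_iff, h0, hb]
      refine inK4_of_two_mul_eq_zero hn h1.2 hb2 ?_ ?_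
      · rw [← h0]; exact h.map_adj_iff.2 h01
      · rw [← hb]; exact h.map_adj_iff.2 h11
    exact one (mem_C1_of_inK4 two this).1
  have key := h.image_setOf_inK4 0 (1, 0)
  rw [h0, hb, setOf_inK4_eq hn two, setOf_inK4_eq hn hb2] at key
  calc h '' C1 n = h '' insert (1, 0) (C1 n \ {(1, 0)}) := by
        rw [Set.insert_sdiff_singleton, Set.insert_eq_of_mem (one_mem_C1 (by omega))]
    _ = C1 n := by
        rw [Set.image_insert_eq, key, hb, Set.insert_sdiff_singleton, Set.insert_eq_of_mem h1]

def swapIso (n : ℕ) : Gamma n ≃g Gamma n where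
  toEquiv := Equiv.prodComm _ _
  map_rel_iff' := by
    intro x y
    simp only [Equiv.prodComm_apply, adj_iff, ne_eq, Prod.swap_inj, Prod.fst_swap, Prod.snd_swap]
    grind

def shearIso (n : ℕ) : Gamma n ≃g Gamma n where
  toFun p := (p.1, p.1 - p.2)
  invFun p := (p.1, p.1 - p.2)
  left_inv p := by simp
  right_inv p := by simp
  map_rel_iff' := by
    intro x y
    simp only [Equiv.coe_fn_mk, adj_iff, ne_eq, Prod.ext_iff]
    grind

def cliqueIso (n : ℕ) : Fin 3 → Gamma n ≃g Gamma n :=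
  ![SimpleGraph.Iso.refl, swapIso n, shearIso n]

theorem cliqueIso_apply_zero (k : Fin 3) : cliqueIso n k 0 = 0 := by
  fin_cases k <;> simp [cliqueIso, swapIso, shearIso]

theorem image_cliqueIso_C1 (k : Fin 3) : cliqueIso n k '' C1 n = ![C1 n, C2 n, C3 n] k := by
  fin_cases k
  · simp [cliqueIso]
  · ext ⟨a, b⟩; simp [cliqueIso, swapIso, C1, C2, and_comm, eq_comm]
  · ext ⟨a, b⟩; simp [cliqueIso, shearIso, C1, C3]; grind

end Gamma

open Gamma in
/-- If `f` is an automorphism of `Γ(n)` fixing `(0,0)`, then `f`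
permutes the three cliques `C₁, C₂, C₃`. -/
theorem Gamma_aut_permutes_cliques (n : ℕ) (hn : 4 ≤ n) (f : Gamma n ≃g Gamma n)
    (hf : f (0, 0) = (0, 0)) :
    ∀ k : Fin 3, ∃ l : Fin 3,
      ⇑f '' (![C1 n, C2 n, C3 n] k) = ![C1 n, C2 n, C3 n] l := by
  rw [Prod.mk_zero_zero] at hf
  intro k
  set g : Gamma n ≃g Gamma n := (cliqueIso n k).trans f
  have hg0 : g 0 = 0 := by simp [g, cliqueIso_apply_zero, hf]
  obtain ⟨l, x, hx, hgx⟩ : ∃ l, g (1, 0) ∈ cliqueIso n l '' C1 n := by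
    simp only [image_cliqueIso_C1, ← adj_zero_iff]
    rw [← hg0, g.map_adj_iff, adj_zero_iff]
    exact ⟨0, one_mem_C1 (by omega)⟩
  refine ⟨l, ?_⟩
  set h : Gamma n ≃g Gamma n := g.trans (cliqueIso n l).symm
  have h0 : h 0 = 0 := by simp [h, hg0, RelIso.symm_apply_eq, cliqueIso_apply_zero]
  have h1 : h (1, 0) ∈ C1 n := by simpa [h, ← hgx] using hx
  calc f '' ![C1 n, C2 n, C3 n] k = cliqueIso n l '' (h '' C1 n) := by
        simp [← image_cliqueIso_C1 k, Set.image_image, h, g]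
    _ = ![C1 n, C2 n, C3 n] l := by rw [image_C1_of_apply_mem_C1 hn h h0 h1, image_cliqueIso_C1]
end

section
/- Let n ≥ 4 and let f be an automorphism of Γ(n) such that f(0,0) = (0,0), f(C₁) = C₁, f(C₂) = C₂ and f(C₃) = C₃ (setwise). Then there exists an injective function c : ℤ_n → ℤ_n with c(0) = 0 and c(i) ≠ 0 for i ≠ 0, such that f(i,j) = (c(i), c(j)) for all i, j ∈ ℤ_n. -/
/-!
Two distinct vertices of `Γ(n)` are adjacent iff they lie on a common row, column or diagonal,
and stabilising `C₁, C₂, C₃` together with the origin means that `f` preserves the three lines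
through the origin. Setting `c j := (f (0, j)).2`, adjacency to the points of the second
axis forces `f (i, i) = (c i, c i)` and then `f (i, 0) = (c i, 0)`. A general point `(i, j)` is
adjacent to `(i, i)` and to `(j, j)`, so `f (i, j)` is `(c i, c j)` or `(c j, c i)`. In the
swapped case, adjacency to `(i, 0)` gives `c j = 2 c i`, so for a third nonzero `k`, which
exists as `n ≥ 4`, the point `(i, k)` is not swapped; adjacency of `(i, j)` and `(i, k)` then
forces `c k = 2 c i - c j = 0`.
-/

theorem Fintype.exists_ne_of_three_lt_card {α : Type*} [Fintype α] [DecidableEq α]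
    (h : 3 < Fintype.card α) (a b c : α) : ∃ d, d ≠ a ∧ d ≠ b ∧ d ≠ c := by
  have hcard : ({a, b, c} : Finset α).card < (Finset.univ : Finset α).card :=
    Finset.card_le_three.trans_lt h
  obtain ⟨d, -, hd⟩ := Finset.exists_mem_notMem_of_card_lt_card hcard
  simp only [Finset.mem_insert, Finset.mem_singleton, not_or] at hd
  exact ⟨d, hd⟩

theorem Function.Injective.mem_insert_iff_of_image_eq {α β : Type*} {f : α → β}
    (hf : Function.Injective f) {s : Set α} {a : α} {t : Set β} (hs : f '' s = t) (x : α) :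
    f x ∈ insert (f a) t ↔ x ∈ insert a s := by
  rw [← hs, ← Set.image_insert_eq, hf.mem_set_image]

namespace Gamma

variable {n : ℕ}

theorem adj_of_fst_eq {a b b' : ZMod n} (h : b ≠ b') : (Gamma n).Adj (a, b) (a, b') :=
  adj_iff.2 ⟨by simpa using h, Or.inr (Or.inl rfl)⟩

theorem adj_of_snd_eq {a a' b : ZMod n} (h : a ≠ a') : (Gamma n).Adj (a, b) (a', b) :=
  adj_iff.2 ⟨by simpa using h, Or.inl rfl⟩

theorem aligned_of_adj (f : Gamma n ≃g Gamma n) {x y : ZMod n × ZMod n}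
    (h : (Gamma n).Adj x y) :
    (f x).2 = (f y).2 ∨ (f x).1 = (f y).1 ∨ (f x).1 - (f x).2 = (f y).1 - (f y).2 :=
  (adj_iff.1 (f.map_adj_iff.2 h)).2

/-- The lines `{0} ∪ C₂`, `{0} ∪ C₁` and `{0} ∪ C₃` through the origin are `f`-invariant. -/
structure PreservesAxes (f : Gamma n ≃g Gamma n) : Prop where
  fst_eq_zero_iff : ∀ x, (f x).1 = 0 ↔ x.1 = 0
  snd_eq_zero_iff : ∀ x, (f x).2 = 0 ↔ x.2 = 0
  fst_eq_snd_iff : ∀ x, (f x).1 = (f x).2 ↔ x.1 = x.2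

theorem preservesAxes_of_image_eq {f : Gamma n ≃g Gamma n} (hf : f (0, 0) = (0, 0))
    (h1 : ⇑f '' C1 n = C1 n) (h2 : ⇑f '' C2 n = C2 n) (h3 : ⇑f '' C3 n = C3 n) :
    PreservesAxes f := by
  have axis : ∀ (P : ZMod n × ZMod n → Prop) (C : Set (ZMod n × ZMod n)), ⇑f '' C = C →
      insert (0, 0) C = {x | P x} → ∀ x, P (f x) ↔ P x := fun P C hC hP x => by
    simpa only [hf, hP, Set.mem_ofPred_eq] using f.injective.mem_insert_iff_of_image_eq (a := (0, 0)) hC x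
  refine ⟨axis (fun x => x.1 = 0) _ h2 ?_, axis (fun x => x.2 = 0) _ h1 ?_,
    axis (fun x => x.1 = x.2) _ h3 ?_⟩ <;>
    ext ⟨a, b⟩ <;> simp only [C1, C2, C3, Set.mem_insert_iff, Set.mem_ofPred_eq, Prod.mk.injEq] <;>
    grind

def coordMap (f : Gamma n ≃g Gamma n) (j : ZMod n) : ZMod n := (f (0, j)).2

namespace PreservesAxes

variable {f : Gamma n ≃g Gamma n}

theorem apply_zero_left (hf : PreservesAxes f) (j : ZMod n) : f (0, j) = (0, coordMap f j) :=
  Prod.ext ((hf.fst_eq_zero_iff _).2 rfl) rfl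

theorem coordMap_eq_zero_iff (hf : PreservesAxes f) {j : ZMod n} : coordMap f j = 0 ↔ j = 0 :=
  hf.snd_eq_zero_iff (0, j)

theorem coordMap_zero (hf : PreservesAxes f) : coordMap f 0 = 0 :=
  hf.coordMap_eq_zero_iff.2 rfl

theorem coordMap_injective (hf : PreservesAxes f) : Function.Injective (coordMap f) :=
  fun i j h => by
    have : f (0, i) = f (0, j) := by rw [hf.apply_zero_left, hf.apply_zero_left, h]
    simpa using f.injective this

theorem apply_diag (hf : PreservesAxes f) (i : ZMod n) :
    f (i, i) = (coordMap f i, coordMap f i) := by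
  by_cases hi : i = 0
  · subst hi
    rw [hf.apply_zero_left, hf.coordMap_zero]
  obtain ⟨⟨u, v⟩, hp⟩ : ∃ p, f (i, i) = p := ⟨_, rfl⟩
  have huv : u = v := by simpa [hp] using hf.fst_eq_snd_iff (i, i)
  have hu : u ≠ 0 := by simpa [hp] using (hf.fst_eq_zero_iff (i, i)).not.2 hi
  have hci : coordMap f i ≠ 0 := hf.coordMap_eq_zero_iff.not.2 hi
  have h := aligned_of_adj f (adj_of_snd_eq (Ne.symm hi) : (Gamma n).Adj (0, i) (i, i))
  rw [hf.apply_zero_left, hp] at h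
  dsimp only at h
  subst huv
  rcases h with h | h | h
  · rw [hp, h]
  · exact absurd h.symm hu
  · exact absurd (by linear_combination -h) hci

theorem apply_zero_right (hf : PreservesAxes f) (i : ZMod n) :
    f (i, 0) = (coordMap f i, 0) := by
  by_cases hi : i = 0
  · subst hi
    rw [hf.apply_zero_left, hf.coordMap_zero]
  obtain ⟨⟨u, v⟩, hp⟩ : ∃ p, f (i, 0) = p := ⟨_, rfl⟩
  have hv : v = 0 := by simpa [hp] using hf.snd_eq_zero_iff (i, 0)
  have hu : u ≠ 0 := by simpa [hp] using (hf.fst_eq_zero_iff (i, 0)).not.2 hi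
  have hci : coordMap f i ≠ 0 := hf.coordMap_eq_zero_iff.not.2 hi
  have h := aligned_of_adj f (adj_of_fst_eq (Ne.symm hi) : (Gamma n).Adj (i, 0) (i, i))
  rw [hp, hf.apply_diag] at h
  dsimp only at h
  subst hv
  rcases h with h | h | h
  · exact absurd h.symm hci
  · rw [hp, h]
  · exact absurd (by linear_combination h) hu

theorem apply_eq_or_swap (hf : PreservesAxes f) {i j : ZMod n} (hij : i ≠ j) :
    f (i, j) = (coordMap f i, coordMap f j) ∨ f (i, j) = (coordMap f j, coordMap f i) := by
  obtain ⟨⟨u, v⟩, hp⟩ : ∃ p, f (i, j) = p := ⟨_, rfl⟩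
  have huv : u ≠ v := by simpa [hp] using (hf.fst_eq_snd_iff (i, j)).not.2 hij
  have hc : coordMap f i ≠ coordMap f j := hf.coordMap_injective.ne hij
  have hI := aligned_of_adj f (adj_of_fst_eq (Ne.symm hij) : (Gamma n).Adj (i, j) (i, i))
  have hJ := aligned_of_adj f (adj_of_snd_eq hij : (Gamma n).Adj (i, j) (j, j))
  rw [hp, hf.apply_diag] at hI hJ
  dsimp only at hI hJ
  rw [sub_self, sub_eq_zero] at hI hJ
  rw [hp]
  grind

theorem coordMap_eq_two_mul_of_swap (hf : PreservesAxes f) {i j : ZMod n} (hi : i ≠ 0)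
    (hj : j ≠ 0) (hij : i ≠ j) (hswap : f (i, j) = (coordMap f j, coordMap f i)) :
    coordMap f j = 2 * coordMap f i := by
  have h := aligned_of_adj f (adj_of_fst_eq hj : (Gamma n).Adj (i, j) (i, 0))
  rw [hswap, hf.apply_zero_right] at h
  dsimp only at h
  rcases h with h | h | h
  · exact absurd h (hf.coordMap_eq_zero_iff.not.2 hi)
  · exact absurd (hf.coordMap_injective h) (Ne.symm hij)
  · linear_combination h

theorem apply_eq (hf : PreservesAxes f) (hn : 3 < n) (i j : ZMod n) :
    f (i, j) = (coordMap f i, coordMap f j) := by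
  by_cases hi : i = 0
  · subst hi
    rw [hf.apply_zero_left, hf.coordMap_zero]
  by_cases hj : j = 0
  · subst hj
    rw [hf.apply_zero_right, hf.coordMap_zero]
  by_cases hij : i = j
  · subst hij
    exact hf.apply_diag i
  refine (hf.apply_eq_or_swap hij).resolve_right fun hswap => ?_
  have : NeZero n := ⟨by omega⟩
  obtain ⟨k, hk, hki, hkj⟩ := Fintype.exists_ne_of_three_lt_card (by rwa [ZMod.card]) 0 i j
  have hik : f (i, k) = (coordMap f i, coordMap f k) :=
    (hf.apply_eq_or_swap (Ne.symm hki)).resolve_right fun hswap' =>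
      hkj <| hf.coordMap_injective <|
        (hf.coordMap_eq_two_mul_of_swap hi hk (Ne.symm hki) hswap').trans
          (hf.coordMap_eq_two_mul_of_swap hi hj hij hswap).symm
  have h := aligned_of_adj f (adj_of_fst_eq (Ne.symm hkj) : (Gamma n).Adj (i, j) (i, k))
  rw [hswap, hik] at h
  dsimp only at h
  have h2 := hf.coordMap_eq_two_mul_of_swap hi hj hij hswap
  rcases h with h | h | h
  · exact hki (hf.coordMap_injective h.symm)
  · exact hij (hf.coordMap_injective h).symm
  · exact hk (hf.coordMap_eq_zero_iff.1 (by linear_combination h - h2))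

end PreservesAxes

end Gamma

/-- If an automorphism `f` of `Γ(n)` fixes `(0,0)` and stabilizes each
of `C₁`, `C₂`, `C₃` setwise, then `f` acts coordinatewise via an injective map
`c : ℤ_n → ℤ_n` with `c(0) = 0` and `c(i) ≠ 0` for `i ≠ 0`. -/
theorem Gamma_aut_fixing_cliques_coordinatewise (n : ℕ) (hn : 4 ≤ n)
    (f : Gamma n ≃g Gamma n) (hf : f (0, 0) = (0, 0)) (h1 : ⇑f '' C1 n = C1 n)
    (h2 : ⇑f '' C2 n = C2 n) (h3 : ⇑f '' C3 n = C3 n) :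
    ∃ c : ZMod n → ZMod n, Function.Injective c ∧ c 0 = 0 ∧
      (∀ i : ZMod n, i ≠ 0 → c i ≠ 0) ∧
      (∀ i j : ZMod n, f (i, j) = (c i, c j)) := by
  have hax := Gamma.preservesAxes_of_image_eq hf h1 h2 h3
  exact ⟨Gamma.coordMap f, hax.coordMap_injective, hax.coordMap_zero,
    fun i => hax.coordMap_eq_zero_iff.not.2, hax.apply_eq hn⟩
end

section
/- Let n ≥ 4, let f be an automorphism of Γ(n) with f(0,0) = (0,0), f(C₁) = C₁, f(C₂) = C₂, f(C₃) = C₃, and let c : ℤ_n → ℤ_n be an injective function with c(0) = 0 such that f(i,j) = (c(i), c(j)) for all i, j ∈ ℤ_n. Then c(i+k) − c(i) = c(j+k) − c(j) for all nonzero i, j, k ∈ ℤ_n. -/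
namespace Gamma

variable {n : ℕ}

lemma adj_add_diag {k : ZMod n} (hk : k ≠ 0) (p : ZMod n × ZMod n) :
    (Gamma n).Adj (p + (k, k)) p := by
  have hkk : ((k, k) : ZMod n × ZMod n) ≠ 0 := fun h => hk (congrArg Prod.fst h)
  refine ⟨by simpa using hkk, by simpa using hkk, ?_⟩
  simp

lemma sub_eq_sub_of_adj {a b a' b' : ZMod n} (h : (Gamma n).Adj (a, b) (a', b'))
    (ha : a ≠ a') (hb : b ≠ b') : a - a' = b - b' := by
  obtain ⟨-, -, h | h | h⟩ := h
  · exact absurd (sub_eq_zero.mp h) hb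
  · exact absurd (sub_eq_zero.mp h) ha
  · exact h

end Gamma

theorem Gamma_aut_c_constant_increments_general (n : ℕ)
    (f : Gamma n ≃g Gamma n)
    (c : ZMod n → ZMod n) (hc_inj : Function.Injective c)
    (hfc : ∀ i j : ZMod n, f (i, j) = (c i, c j)) :
    ∀ i j k : ZMod n, i ≠ 0 → j ≠ 0 → k ≠ 0 →
      c (i + k) - c i = c (j + k) - c j := by
  intro i j k _ _ hk
  have hadj := f.map_adj_iff.mpr (Gamma.adj_add_diag hk (i, j))
  rw [Prod.mk_add_mk, hfc, hfc] at hadj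
  exact Gamma.sub_eq_sub_of_adj hadj (hc_inj.ne (add_ne_left.mpr hk))
    (hc_inj.ne (add_ne_left.mpr hk))

/-- **Claim 2.** With `f` and `c` as in the key lemma, the increments
of `c` are constant: `c(i+k) - c(i) = c(j+k) - c(j)` for nonzero `i, j, k`. -/
theorem Gamma_aut_c_constant_increments (n : ℕ) (hn : 4 ≤ n)
    (f : Gamma n ≃g Gamma n) (hf : f (0, 0) = (0, 0)) (h1 : ⇑f '' C1 n = C1 n)
    (h2 : ⇑f '' C2 n = C2 n) (h3 : ⇑f '' C3 n = C3 n)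
    (c : ZMod n → ZMod n) (hc_inj : Function.Injective c) (hc0 : c 0 = 0)
    (hfc : ∀ i j : ZMod n, f (i, j) = (c i, c j)) :
    ∀ i j k : ZMod n, i ≠ 0 → j ≠ 0 → k ≠ 0 →
      c (i + k) - c i = c (j + k) - c j :=
  Gamma_aut_c_constant_increments_general n f c hc_inj hfc
end

section
/- Let n ≥ 4, let f be an automorphism of Γ(n) with f(0,0) = (0,0), f(C₁) = C₁, f(C₂) = C₂, f(C₃) = C₃, and let c : ℤ_n → ℤ_n be an injective function with c(0) = 0 such that f(i,j) = (c(i), c(j)) for all i, j ∈ ℤ_n. Then c(i) + c(−i) = 0 in ℤ_n for every nonzero i ∈ ℤ_n. -/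
/-! The vertices `(i, 0)` and `(0, -i)` differ by the diagonal element `(i, i)`, so they are
adjacent; their images `(c i, 0)` and `(0, c (-i))` are adjacent too, and two nonzero points on
the two axes can only be adjacent through the diagonal, which forces `c i = -c (-i)`. -/

theorem Gamma_adj_axes_iff {n : ℕ} {a b : ZMod n} (ha : a ≠ 0) (hb : b ≠ 0) :
    (Gamma n).Adj (a, 0) (0, b) ↔ a + b = 0 := by
  constructor
  · rintro ⟨-, -, h⟩
    simp only [Prod.fst_sub, Prod.snd_sub, sub_zero, zero_sub, neg_eq_zero] at h
    rcases h with h | h | h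
    · exact absurd h hb
    · exact absurd h ha
    · linear_combination h
  · intro hab
    refine ⟨fun h => ha (congrArg Prod.fst h),
      fun h => ha (by simpa using congrArg Prod.fst h), ?_⟩
    simp only [Prod.fst_sub, Prod.snd_sub, sub_zero, zero_sub]
    exact Or.inr (Or.inr (by linear_combination hab))

theorem Gamma_aut_c_antisymmetric_general (n : ℕ)
    (f : Gamma n ≃g Gamma n)
    (c : ZMod n → ZMod n) (hc_inj : Function.Injective c) (hc0 : c 0 = 0)
    (hfc : ∀ i j : ZMod n, f (i, j) = (c i, c j)) :
    ∀ i : ZMod n, i ≠ 0 → c i + c (-i) = 0 := by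
  intro i hi
  have hci : c i ≠ 0 := (hc_inj.ne_iff' hc0).mpr hi
  have hcni : c (-i) ≠ 0 := (hc_inj.ne_iff' hc0).mpr (neg_ne_zero.mpr hi)
  have hadj : (Gamma n).Adj (i, 0) (0, -i) :=
    (Gamma_adj_axes_iff hi (neg_ne_zero.mpr hi)).mpr (add_neg_cancel i)
  have himage := f.map_adj_iff.mpr hadj
  rw [hfc, hfc, hc0] at himage
  exact (Gamma_adj_axes_iff hci hcni).mp himage

/-- **Claim 3.** With `f` and `c` as in the key lemma,
`c(i) + c(-i) = 0` for every nonzero `i`. -/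
theorem Gamma_aut_c_antisymmetric (n : ℕ) (hn : 4 ≤ n)
    (f : Gamma n ≃g Gamma n) (hf : f (0, 0) = (0, 0)) (h1 : ⇑f '' C1 n = C1 n)
    (h2 : ⇑f '' C2 n = C2 n) (h3 : ⇑f '' C3 n = C3 n)
    (c : ZMod n → ZMod n) (hc_inj : Function.Injective c) (hc0 : c 0 = 0)
    (hfc : ∀ i j : ZMod n, f (i, j) = (c i, c j)) :
    ∀ i : ZMod n, i ≠ 0 → c i + c (-i) = 0 :=
  Gamma_aut_c_antisymmetric_general n f c hc_inj hc0 hfc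
end

section
/- Let n ≥ 4 and let c₁, c₂, …, c_{n−1} be pairwise distinct nonzero elements of ℤ_n such that c_{i+1} − c_i = d for all 1 ≤ i ≤ n−2 (for some fixed d ∈ ℤ_n) and c₁ + c_{n−1} = 0 in ℤ_n. Then d is a unit of ℤ_n, c₁ is a unit of ℤ_n, and c_i = i·c₁ in ℤ_n for every 1 ≤ i ≤ n−1. -/
theorem eq_add_nsmul_of_forall_sub_eq {G : Type*} [AddCommGroup G] {c : ℕ → G} {d : G} {N : ℕ}
    (h : ∀ i, 1 ≤ i → i ≤ N → c (i + 1) - c i = d) : ∀ k ≤ N, c (k + 1) = c 1 + k • d := by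
  intro k hk
  induction k with
  | zero => simp
  | succ k ih =>
    rw [succ_nsmul, ← add_assoc, ← ih (by omega), ← h (k + 1) (by omega) hk, add_sub_cancel]

namespace ZMod

theorem exists_natCast_mul_eq_zero_of_not_isUnit {n : ℕ} [NeZero n] {d : ZMod n}
    (hd : ¬IsUnit d) : ∃ m : ℕ, 0 < m ∧ 2 * m ≤ n ∧ (m : ZMod n) * d = 0 := by
  rw [← natCast_zmod_val d, isUnit_iff_coprime] at hd
  obtain ⟨m, hn⟩ := Nat.gcd_dvd_right d.val n
  obtain ⟨t, hdt⟩ := Nat.gcd_dvd_left d.val n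
  have hg : 2 ≤ d.val.gcd n := by
    have : d.val.gcd n ≠ 0 := (Nat.gcd_pos_of_pos_right _ (NeZero.pos n)).ne'
    have : d.val.gcd n ≠ 1 := hd
    omega
  refine ⟨m, Nat.pos_of_ne_zero ?_, ?_, ?_⟩
  · rintro rfl
    exact NeZero.ne n (by simpa using hn)
  · rw [hn]
    exact Nat.mul_le_mul_right m hg
  · rw [← natCast_zmod_val d, ← Nat.cast_mul, hdt, natCast_eq_zero_iff]
    exact Dvd.intro t (by rw [← mul_assoc, mul_comm m, ← hn])

theorem eq_zero_of_forall_add_natCast_mul_ne_zero {n : ℕ} [NeZero n] {d e : ZMod n}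
    (hd : IsUnit d) (h : ∀ j : ℕ, 1 ≤ j → j < n → e + j * d ≠ 0) : e = 0 := by
  set u := -e * hd.unit⁻¹
  have hud : u * d = -e := by simp [u, mul_assoc]
  by_contra he
  have hu : u ≠ 0 := by
    rintro hu
    exact he (neg_eq_zero.mp (by rw [← hud, hu, zero_mul]))
  refine h u.val (Nat.one_le_iff_ne_zero.mpr ((val_ne_zero u).mpr hu)) (val_lt u) ?_
  rw [natCast_zmod_val, hud, add_neg_cancel]

end ZMod

theorem arithmetic_progression_units_general (n : ℕ) (hn : 4 ≤ n) (c : ℕ → ZMod n) (d : ZMod n)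
    (h_distinct : ∀ i j : ℕ, 1 ≤ i → i ≤ n - 1 → 1 ≤ j → j ≤ n - 1 → i ≠ j → c i ≠ c j)
    (h_nonzero : ∀ i : ℕ, 1 ≤ i → i ≤ n - 1 → c i ≠ 0)
    (h_step : ∀ i : ℕ, 1 ≤ i → i ≤ n - 2 → c (i + 1) - c i = d) :
    IsUnit d ∧ IsUnit (c 1) ∧ ∀ i : ℕ, 1 ≤ i → i ≤ n - 1 → c i = (i : ZMod n) * c 1 := by
  have : NeZero n := ⟨by omega⟩
  have hprog : ∀ k ≤ n - 2, c (k + 1) = c 1 + (k : ZMod n) * d := fun k hk => by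
    rw [eq_add_nsmul_of_forall_sub_eq h_step k hk, nsmul_eq_mul]
  have hd : IsUnit d := by
    by_contra hd
    obtain ⟨m, hm0, hmn, hmd⟩ := ZMod.exists_natCast_mul_eq_zero_of_not_isUnit hd
    refine h_distinct (m + 1) 1 (by omega) (by omega) le_rfl (by omega) (by omega) ?_
    rw [hprog m (by omega), hmd, add_zero]
  have hc1 : c 1 = d := by
    refine sub_eq_zero.mp (ZMod.eq_zero_of_forall_add_natCast_mul_ne_zero hd fun j hj1 hjn => ?_)
    obtain ⟨k, rfl⟩ := Nat.exists_eq_add_of_le' hj1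
    convert h_nonzero (k + 1) hj1 (by omega) using 1
    rw [hprog k (by omega)]
    push_cast
    ring
  refine ⟨hd, hc1 ▸ hd, fun i hi1 hi2 => ?_⟩
  obtain ⟨k, rfl⟩ := Nat.exists_eq_add_of_le' hi1
  rw [hprog k (by omega), hc1]
  push_cast
  ring

/-- If `c₁, …, c_{n-1}` are pairwise distinct nonzero elements of `ℤ_n`
with constant difference `d` and `c₁ + c_{n-1} = 0`, then `d` and `c₁` are units and
`cᵢ = i·c₁` for all `1 ≤ i ≤ n-1`. -/
theorem arithmetic_progression_units (n : ℕ) (hn : 4 ≤ n) (c : ℕ → ZMod n) (d : ZMod n)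
    (h_distinct : ∀ i j : ℕ, 1 ≤ i → i ≤ n - 1 → 1 ≤ j → j ≤ n - 1 → i ≠ j → c i ≠ c j)
    (h_nonzero : ∀ i : ℕ, 1 ≤ i → i ≤ n - 1 → c i ≠ 0)
    (h_step : ∀ i : ℕ, 1 ≤ i → i ≤ n - 2 → c (i + 1) - c i = d)
    (h_sum : c 1 + c (n - 1) = 0) :
    IsUnit d ∧ IsUnit (c 1) ∧ ∀ i : ℕ, 1 ≤ i → i ≤ n - 1 → c i = (i : ZMod n) * c 1 :=
  arithmetic_progression_units_general n hn c d h_distinct h_nonzero h_step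
end

section
/- If n ≥ 4 is prime, then Γ(n) is arc-transitive: for all vertices u, v, x, y of Γ(n) with u adjacent to v and x adjacent to y, there exists an automorphism f of Γ(n) with f(u) = x and f(v) = y. -/
section CayleyGraph

variable {G : Type*} [AddGroup G] {Γ : SimpleGraph G} {S : Set G}

def affineIso (hΓ : ∀ a b, Γ.Adj a b ↔ a ≠ b ∧ a - b ∈ S) (A : G ≃+ G)
    (hA : ∀ p, A p ∈ S ↔ p ∈ S) (u x : G) : Γ ≃g Γ where
  toEquiv := (Equiv.subRight u).trans (A.toEquiv.trans (Equiv.addRight x))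
  map_rel_iff' {a b} := by
    have hsub : A (a - u) + x - (A (b - u) + x) = A (a - b) := by
      rw [add_sub_add_right_eq_sub, ← map_sub, sub_sub_sub_cancel_right]
    simp only [Equiv.trans_apply, Equiv.subRight_apply, AddEquiv.toEquiv_eq_coe,
      AddEquiv.coe_toEquiv, Equiv.coe_addRight, hΓ, hsub, hA, ne_eq, add_left_inj,
      EmbeddingLike.apply_eq_iff_eq, sub_left_inj]

theorem affineIso_apply (hΓ : ∀ a b, Γ.Adj a b ↔ a ≠ b ∧ a - b ∈ S) (A : G ≃+ G)
    (hA : ∀ p, A p ∈ S ↔ p ∈ S) (u x z : G) : affineIso hΓ A hA u x z = A (z - u) + x :=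
  rfl

theorem exists_iso_of_addEquiv_transitive_on (hΓ : ∀ a b, Γ.Adj a b ↔ a ≠ b ∧ a - b ∈ S)
    {s₀ : G} (hS : ∀ s ∈ S, ∃ A : G ≃+ G, (∀ p, A p ∈ S ↔ p ∈ S) ∧ A s₀ = s)
    {u v x y : G} (huv : Γ.Adj u v) (hxy : Γ.Adj x y) :
    ∃ f : Γ ≃g Γ, f u = x ∧ f v = y := by
  obtain ⟨B, hBS, hB⟩ := hS (v - u) ((hΓ v u).1 huv.symm).2
  obtain ⟨C, hCS, hC⟩ := hS (y - x) ((hΓ y x).1 hxy.symm).2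
  have hA : ∀ p, B.symm.trans C p ∈ S ↔ p ∈ S := fun p => by
    rw [AddEquiv.trans_apply, hCS, ← hBS, AddEquiv.apply_symm_apply]
  refine ⟨affineIso hΓ (B.symm.trans C) hA u x, ?_, ?_⟩
  · rw [affineIso_apply, sub_self, map_zero, zero_add]
  · rw [affineIso_apply, AddEquiv.trans_apply, ← hB, AddEquiv.symm_apply_apply, hC,
      sub_add_cancel]

end CayleyGraph

def shearSub (M : Type*) [AddCommGroup M] : M × M ≃+ M × M where
  toFun p := (p.1, p.1 - p.2)
  invFun p := (p.1, p.1 - p.2)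
  left_inv p := by simp
  right_inv p := by simp
  map_add' p q := Prod.ext rfl (add_sub_add_comm ..)

section ConnectionSet

variable {n : ℕ}

theorem prodComm_mem_cayS_iff (p : ZMod n × ZMod n) :
    AddEquiv.prodComm p ∈ cayS n ↔ p ∈ cayS n := by
  obtain ⟨a, b⟩ := p
  simp only [cayS, Set.mem_ofPred_eq, AddEquiv.coe_prodComm, Prod.swap_prod_mk, ne_eq,
    Prod.mk_eq_zero]
  constructor <;> rintro ⟨h0, h⟩ <;> exact ⟨by tauto, by rcases h with h | h | h <;> simp [h]⟩

theorem shearSub_mem_cayS_iff (p : ZMod n × ZMod n) :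
    shearSub (ZMod n) p ∈ cayS n ↔ p ∈ cayS n := by
  obtain ⟨a, b⟩ := p
  have hb : a = a - b ↔ b = 0 := by rw [eq_comm, sub_eq_self]
  simp only [cayS, shearSub, Set.mem_ofPred_eq, AddEquiv.coe_mk, Equiv.coe_fn_mk, ne_eq,
    Prod.mk_eq_zero, sub_eq_zero, hb]
  constructor <;> rintro ⟨h0, h⟩
  · exact ⟨fun ⟨ha, hb⟩ => h0 ⟨ha, ha.trans hb.symm⟩, by tauto⟩
  · exact ⟨fun ⟨ha, hb⟩ => h0 ⟨ha, hb.symm.trans ha⟩, by tauto⟩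

theorem units_smul_mem_cayS_iff (c : (ZMod n)ˣ) (p : ZMod n × ZMod n) :
    c • p ∈ cayS n ↔ p ∈ cayS n := by
  simp only [cayS, Set.mem_ofPred_eq, ne_eq, smul_eq_zero_iff_eq, Prod.smul_fst,
    Prod.smul_snd, smul_left_cancel_iff]

theorem exists_addEquiv_cayS_apply_one_zero (hp : n.Prime) {s : ZMod n × ZMod n}
    (hs : s ∈ cayS n) :
    ∃ A : (ZMod n × ZMod n) ≃+ (ZMod n × ZMod n), (∀ p, A p ∈ cayS n ↔ p ∈ cayS n) ∧
      A (1, 0) = s := by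
  have : Fact n.Prime := ⟨hp⟩
  obtain ⟨a, b⟩ := s
  obtain ⟨hs0, hb | ha | hab⟩ := hs
  · obtain rfl : b = 0 := hb
    have ha : a ≠ 0 := by simpa using hs0
    exact ⟨DistribMulAction.toAddEquiv _ (Units.mk0 a ha),
      fun p => units_smul_mem_cayS_iff _ p, by simp⟩
  · obtain rfl : a = 0 := ha
    have hb : b ≠ 0 := by simpa using hs0
    refine ⟨(DistribMulAction.toAddEquiv _ (Units.mk0 b hb)).trans AddEquiv.prodComm,
      fun p => ?_, by simp⟩
    rw [AddEquiv.trans_apply, prodComm_mem_cayS_iff, DistribMulAction.toAddEquiv_apply,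
      units_smul_mem_cayS_iff]
  · obtain rfl : a = b := hab
    have ha : a ≠ 0 := by simpa using hs0
    refine ⟨(DistribMulAction.toAddEquiv _ (Units.mk0 a ha)).trans (shearSub _),
      fun p => ?_, by simp [shearSub]⟩
    rw [AddEquiv.trans_apply, shearSub_mem_cayS_iff, DistribMulAction.toAddEquiv_apply,
      units_smul_mem_cayS_iff]

end ConnectionSet

theorem Gamma_arc_transitive_general (n : ℕ) (hp : n.Prime) :
    ∀ u v x y : ZMod n × ZMod n, (Gamma n).Adj u v → (Gamma n).Adj x y →
      ∃ f : Gamma n ≃g Gamma n, f u = x ∧ f v = y :=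
  fun _ _ _ _ => exists_iso_of_addEquiv_transitive_on (fun _ _ => Iff.rfl)
    (fun _ => exists_addEquiv_cayS_apply_one_zero hp)

/-- If `n ≥ 4` is prime, then `Γ(n)` is arc-transitive. -/
theorem Gamma_arc_transitive (n : ℕ) (hn : 4 ≤ n) (hp : n.Prime) :
    ∀ u v x y : ZMod n × ZMod n, (Gamma n).Adj u v → (Gamma n).Adj x y →
      ∃ f : Gamma n ≃g Gamma n, f u = x ∧ f v = y :=
  Gamma_arc_transitive_general n hp
end

section
/- Let n ≥ 7 be prime. Then the vertices (2,3) and (4,2) are both at graph distance 2 from (0,0) in Γ(n), but there is no automorphism f of Γ(n) with f(0,0) = (0,0) and f(2,3) = (4,2). -/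
/-!
Common neighbours of `0` and a vertex `v` off the three lines through `0` are the six points where
those lines meet the three lines through `v`. For `v = (2,3)` these six points form a hexagon, so
none of them is adjacent to three others; for `v = (4,2)` the point `(2,0)` is adjacent to the
common neighbours `(4,0)`, `(0,-2)` and `(2,2)`. An automorphism fixing `0` preserves this
configuration. All computations involve only integers of absolute value below `7`, so they can be
done in `ℤ × ℤ` and transported to `ZMod n`.
-/

open SimpleGraph

def OnAxesOrDiagonal {R : Type*} [Zero R] (d : R × R) : Prop :=
  d.2 = 0 ∨ d.1 = 0 ∨ d.1 = d.2

instance {R : Type*} [Zero R] [DecidableEq R] (d : R × R) : Decidable (OnAxesOrDiagonal d) :=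
  inferInstanceAs (Decidable (_ ∨ _ ∨ _))

lemma Gamma_adj_iff {n : ℕ} {x y : ZMod n × ZMod n} :
    (Gamma n).Adj x y ↔ x ≠ y ∧ OnAxesOrDiagonal (x - y) :=
  ⟨fun h => ⟨h.1, h.2.2⟩, fun h => ⟨h.1, sub_ne_zero_of_ne h.1, h.2⟩⟩

def latticeGamma : SimpleGraph (ℤ × ℤ) where
  Adj x y := x ≠ y ∧ OnAxesOrDiagonal (x - y)
  symm := by
    constructor
    rintro x y ⟨hne, h⟩
    refine ⟨hne.symm, ?_⟩
    simp only [OnAxesOrDiagonal, Prod.fst_sub, Prod.snd_sub] at h ⊢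
    omega
  loopless := ⟨fun _ h => h.1 rfl⟩

instance : DecidableRel latticeGamma.Adj :=
  fun x y => inferInstanceAs (Decidable (x ≠ y ∧ OnAxesOrDiagonal (x - y)))

/-- `hexNorm d < n` is what lets the three quantities `d.1`, `d.2`, `d.1 - d.2` deciding
adjacency survive reduction mod `n`. -/
def hexNorm (d : ℤ × ℤ) : ℕ :=
  max (max d.1.natAbs d.2.natAbs) (d.1 - d.2).natAbs

def zmodPt (n : ℕ) (p : ℤ × ℤ) : ZMod n × ZMod n :=
  ((p.1 : ZMod n), (p.2 : ZMod n))

lemma intCast_eq_zero_iff_of_natAbs_lt {n : ℕ} {k : ℤ} (hk : k.natAbs < n) :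
    (k : ZMod n) = 0 ↔ k = 0 := by
  refine ⟨fun h => ?_, fun h => by simp [h]⟩
  rw [ZMod.intCast_zmod_eq_zero_iff_dvd] at h
  exact Int.eq_zero_of_abs_lt_dvd h (by rw [Int.abs_eq_natAbs]; exact_mod_cast hk)

def crossings {R : Type*} [Ring R] (v : R × R) : List (R × R) :=
  [(v.1, 0), (v.1 - v.2, 0), (0, v.2), (0, v.2 - v.1), (v.1, v.1), (v.2, v.2)]

lemma mem_crossings_of_mem_commonNeighbors {n : ℕ} {v w : ZMod n × ZMod n}
    (hv : ¬ OnAxesOrDiagonal v) (hw : w ∈ (Gamma n).commonNeighbors 0 v) : w ∈ crossings v := by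
  rw [mem_commonNeighbors, Gamma_adj_iff, Gamma_adj_iff] at hw
  obtain ⟨⟨-, h0⟩, ⟨-, hv'⟩⟩ := hw
  obtain ⟨x, y⟩ := v
  obtain ⟨a, b⟩ := w
  simp only [OnAxesOrDiagonal, crossings, Prod.fst_sub, Prod.snd_sub, Prod.fst_zero,
    Prod.snd_zero, List.mem_cons, Prod.mk.injEq, List.not_mem_nil] at *
  grind

section zmodPt

variable {n : ℕ}

lemma zmodPt_zero : zmodPt n 0 = 0 := by
  simp [zmodPt]

lemma zmodPt_sub (p q : ℤ × ℤ) : zmodPt n (p - q) = zmodPt n p - zmodPt n q := by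
  simp [zmodPt]

lemma zmodPt_eq_zero_iff {d : ℤ × ℤ} (hd : hexNorm d < n) : zmodPt n d = 0 ↔ d = 0 := by
  simp only [hexNorm, max_lt_iff] at hd
  simp only [zmodPt, Prod.ext_iff, Prod.fst_zero, Prod.snd_zero,
    intCast_eq_zero_iff_of_natAbs_lt hd.1.1, intCast_eq_zero_iff_of_natAbs_lt hd.1.2]

lemma zmodPt_inj {p q : ℤ × ℤ} (h : hexNorm (p - q) < n) : zmodPt n p = zmodPt n q ↔ p = q := by
  rw [← sub_eq_zero, ← zmodPt_sub, zmodPt_eq_zero_iff h, sub_eq_zero]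

lemma onAxesOrDiagonal_zmodPt_iff {d : ℤ × ℤ} (hd : hexNorm d < n) :
    OnAxesOrDiagonal (zmodPt n d) ↔ OnAxesOrDiagonal d := by
  simp only [hexNorm, max_lt_iff] at hd
  have hdiag : (d.1 : ZMod n) = d.2 ↔ d.1 = d.2 := by
    rw [← sub_eq_zero, ← Int.cast_sub, intCast_eq_zero_iff_of_natAbs_lt hd.2, sub_eq_zero]
  simp only [OnAxesOrDiagonal, zmodPt, intCast_eq_zero_iff_of_natAbs_lt hd.1.1,
    intCast_eq_zero_iff_of_natAbs_lt hd.1.2, hdiag]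

lemma Gamma_adj_zmodPt_iff {p q : ℤ × ℤ} (h : hexNorm (p - q) < n) :
    (Gamma n).Adj (zmodPt n p) (zmodPt n q) ↔ latticeGamma.Adj p q := by
  rw [Gamma_adj_iff, ← zmodPt_sub, onAxesOrDiagonal_zmodPt_iff h, ne_eq, zmodPt_inj h]
  rfl

lemma exists_zmodPt_of_mem_commonNeighbors {v : ℤ × ℤ} {w : ZMod n × ZMod n}
    (hv : hexNorm v < n) (hv' : ¬ OnAxesOrDiagonal v)
    (hw : w ∈ (Gamma n).commonNeighbors (zmodPt n 0) (zmodPt n v)) :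
    ∃ p ∈ crossings v, w = zmodPt n p := by
  rw [zmodPt_zero] at hw
  have hw' : w ∈ crossings (zmodPt n v) :=
    mem_crossings_of_mem_commonNeighbors (by rwa [onAxesOrDiagonal_zmodPt_iff hv]) hw
  simpa [crossings, zmodPt, eq_comm] using hw'

end zmodPt

def CommonNeighborsContainClaw {V : Type*} (G : SimpleGraph V) (u v : V) : Prop :=
  ∃ w a b c, {w, a, b, c} ⊆ G.commonNeighbors u v ∧ a ≠ b ∧ a ≠ c ∧ b ≠ c ∧
    G.Adj w a ∧ G.Adj w b ∧ G.Adj w c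

lemma CommonNeighborsContainClaw.map {V W : Type*} {G : SimpleGraph V} {H : SimpleGraph W}
    {u v : V} (f : G ≃g H) (h : CommonNeighborsContainClaw G u v) :
    CommonNeighborsContainClaw H (f u) (f v) := by
  obtain ⟨w, a, b, c, hsub, hab, hac, hbc, hwa, hwb, hwc⟩ := h
  refine ⟨f w, f a, f b, f c, ?_, f.injective.ne hab, f.injective.ne hac, f.injective.ne hbc,
    f.map_adj_iff.2 hwa, f.map_adj_iff.2 hwb, f.map_adj_iff.2 hwc⟩
  have hmem : ∀ x ∈ G.commonNeighbors u v, f x ∈ H.commonNeighbors (f u) (f v) := fun x hx => by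
    rw [mem_commonNeighbors] at hx ⊢
    exact ⟨f.map_adj_iff.2 hx.1, f.map_adj_iff.2 hx.2⟩
  simp only [Set.insert_subset_iff, Set.singleton_subset_iff] at hsub ⊢
  exact ⟨hmem _ hsub.1, hmem _ hsub.2.1, hmem _ hsub.2.2.1, hmem _ hsub.2.2.2⟩

lemma dist_eq_two_of_adj_of_adj {V : Type*} {G : SimpleGraph V} {u v w : V} (huv : u ≠ v)
    (hnadj : ¬ G.Adj u v) (huw : G.Adj u w) (hwv : G.Adj w v) : G.dist u v = 2 := by
  have : G.edist u v = 2 := edist_eq_two_iff.2 ⟨huv, hnadj, w, huw, hwv.symm⟩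
  simp [SimpleGraph.dist, this]

section SevenLeN

variable {n : ℕ}

lemma Gamma_dist_zmodPt_eq_two (hn : 7 ≤ n) {u v w : ℤ × ℤ} (huv : hexNorm (u - v) < 7)
    (huw : hexNorm (u - w) < 7) (hwv : hexNorm (w - v) < 7) (hne : u ≠ v)
    (hnadj : ¬ latticeGamma.Adj u v) (hadj₁ : latticeGamma.Adj u w)
    (hadj₂ : latticeGamma.Adj w v) : (Gamma n).dist (zmodPt n u) (zmodPt n v) = 2 :=
  dist_eq_two_of_adj_of_adj ((zmodPt_inj (huv.trans_le hn)).not.2 hne)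
    ((Gamma_adj_zmodPt_iff (huv.trans_le hn)).not.2 hnadj)
    ((Gamma_adj_zmodPt_iff (huw.trans_le hn)).2 hadj₁)
    ((Gamma_adj_zmodPt_iff (hwv.trans_le hn)).2 hadj₂)

lemma commonNeighborsContainClaw_zero_four_two (hn : 7 ≤ n) :
    CommonNeighborsContainClaw (Gamma n) (zmodPt n 0) (zmodPt n (4, 2)) := by
  have adj (p q : ℤ × ℤ) (hpq : hexNorm (p - q) < 7) (h : latticeGamma.Adj p q) :
      (Gamma n).Adj (zmodPt n p) (zmodPt n q) :=
    (Gamma_adj_zmodPt_iff (hpq.trans_le hn)).2 h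
  have ne (p q : ℤ × ℤ) (hpq : hexNorm (p - q) < 7) (h : p ≠ q) : zmodPt n p ≠ zmodPt n q :=
    (zmodPt_inj (hpq.trans_le hn)).not.2 h
  refine ⟨zmodPt n (2, 0), zmodPt n (4, 0), zmodPt n (0, -2), zmodPt n (2, 2), ?_,
    ne _ _ (by decide) (by decide), ne _ _ (by decide) (by decide), ne _ _ (by decide) (by decide),
    adj _ _ (by decide) (by decide), adj _ _ (by decide) (by decide),
    adj _ _ (by decide) (by decide)⟩
  simp only [Set.insert_subset_iff, Set.singleton_subset_iff, mem_commonNeighbors]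
  refine ⟨⟨?_, ?_⟩, ⟨?_, ?_⟩, ⟨?_, ?_⟩, ⟨?_, ?_⟩⟩ <;> exact adj _ _ (by decide) (by decide)

lemma not_commonNeighborsContainClaw_zero_two_three (hn : 7 ≤ n) :
    ¬ CommonNeighborsContainClaw (Gamma n) (zmodPt n 0) (zmodPt n (2, 3)) := by
  rintro ⟨w, a, b, c, hsub, hab, hac, hbc, hwa, hwb, hwc⟩
  simp only [Set.insert_subset_iff, Set.singleton_subset_iff] at hsub
  have crossing {x} (hx : x ∈ (Gamma n).commonNeighbors (zmodPt n 0) (zmodPt n (2, 3))) :=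
    exists_zmodPt_of_mem_commonNeighbors ((show hexNorm (2, 3) < 7 by decide).trans_le hn)
      (by decide) hx
  obtain ⟨p, hp, rfl⟩ := crossing hsub.1
  obtain ⟨q, hq, rfl⟩ := crossing hsub.2.1
  obtain ⟨r, hr, rfl⟩ := crossing hsub.2.2.1
  obtain ⟨s, hs, rfl⟩ := crossing hsub.2.2.2
  have small : ∀ x ∈ crossings ((2, 3) : ℤ × ℤ), ∀ y ∈ crossings ((2, 3) : ℤ × ℤ),
      hexNorm (x - y) < 7 := by decide
  have adj {x y} (hx : x ∈ crossings ((2, 3) : ℤ × ℤ)) (hy : y ∈ crossings ((2, 3) : ℤ × ℤ))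
      (h : (Gamma n).Adj (zmodPt n x) (zmodPt n y)) : latticeGamma.Adj x y :=
    (Gamma_adj_zmodPt_iff ((small x hx y hy).trans_le hn)).1 h
  have hexagon : ∀ x ∈ crossings ((2, 3) : ℤ × ℤ), ∀ y ∈ crossings ((2, 3) : ℤ × ℤ),
      ∀ z ∈ crossings ((2, 3) : ℤ × ℤ), ∀ t ∈ crossings ((2, 3) : ℤ × ℤ),
      latticeGamma.Adj x y → latticeGamma.Adj x z → latticeGamma.Adj x t →
        y = z ∨ y = t ∨ z = t := by decide
  rcases hexagon p hp q hq r hr s hs (adj hp hq hwa) (adj hp hr hwb) (adj hp hs hwc)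
    with rfl | rfl | rfl
  exacts [hab rfl, hac rfl, hbc rfl]

end SevenLeN

theorem Gamma_not_distance_transitive_witness_general (n : ℕ) (hn : 7 ≤ n) :
    (Gamma n).dist (0, 0) ((2 : ZMod n), (3 : ZMod n)) = 2 ∧
    (Gamma n).dist (0, 0) ((4 : ZMod n), (2 : ZMod n)) = 2 ∧
    ¬ ∃ f : Gamma n ≃g Gamma n,
        f (0, 0) = (0, 0) ∧ f ((2 : ZMod n), (3 : ZMod n)) = ((4 : ZMod n), (2 : ZMod n)) := by
  have h00 : ((0, 0) : ZMod n × ZMod n) = zmodPt n 0 := by simp [zmodPt]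
  have h23 : ((2 : ZMod n), (3 : ZMod n)) = zmodPt n (2, 3) := by simp [zmodPt]
  have h42 : ((4 : ZMod n), (2 : ZMod n)) = zmodPt n (4, 2) := by simp [zmodPt]
  rw [h00, h23, h42]
  refine ⟨Gamma_dist_zmodPt_eq_two hn (w := (2, 2)) (by decide) (by decide) (by decide)
      (by decide) (by decide) (by decide) (by decide),
    Gamma_dist_zmodPt_eq_two hn (w := (2, 2)) (by decide) (by decide) (by decide)
      (by decide) (by decide) (by decide) (by decide), ?_⟩
  rintro ⟨f, hf0, hfv⟩
  have hclaw := (commonNeighborsContainClaw_zero_four_two hn).map f.symm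
  rw [f.symm_apply_eq.2 hf0.symm, f.symm_apply_eq.2 hfv.symm] at hclaw
  exact not_commonNeighborsContainClaw_zero_two_three hn hclaw

/-- For prime `n ≥ 7`, the vertices `(2,3)` and `(4,2)` are both at
distance `2` from `(0,0)` in `Γ(n)`, but no automorphism of `Γ(n)` fixes `(0,0)` and
maps `(2,3)` to `(4,2)`. -/
theorem Gamma_not_distance_transitive_witness (n : ℕ) (hn : 7 ≤ n) (hp : n.Prime) :
    (Gamma n).dist (0, 0) ((2 : ZMod n), (3 : ZMod n)) = 2 ∧
    (Gamma n).dist (0, 0) ((4 : ZMod n), (2 : ZMod n)) = 2 ∧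
    ¬ ∃ f : Gamma n ≃g Gamma n,
        f (0, 0) = (0, 0) ∧ f ((2 : ZMod n), (3 : ZMod n)) = ((4 : ZMod n), (2 : ZMod n)) :=
  Gamma_not_distance_transitive_witness_general n hn
end
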